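/- Let A : ℝ → M_n(ℝ) be a continuous matrix-valued function whose values pairwise commute, i.e., A(s) A(t) = A(t) A(s) for all s, t ∈ ℝ, and let g₀ ∈ M_n(ℝ). Then the function g(t) := g₀ · exp(∫₀ᵗ A(s) ds) (matrix exponential) satisfies g(0) = g₀ and, for every t ∈ ℝ, g is differentiable at t with g′(t) = g(t) A(t). (This is the statement that for an Abelian matrix Lie group the Magnus expansion of the solution of the linear initial value problem ġ = g ξ, g(0) = g₀ reduces to its first term, g(t) = g₀ exp(∫₀ᵗ ξ(s) ds).) -/

import Mathlib

/-!
Since the values of `A` commute, so do all the integrals `∫ s in a..b, A s`, hence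
`exp (∫₀ᵘ A) = exp (∫₀ᵗ A) * exp (∫ₜᵘ A)`. Differentiating the second factor at `u = t` only needs
the derivative of `exp` at `0`, which is the identity, and the fundamental theorem of calculus.
-/

open Matrix intervalIntegral

attribute [local instance] Matrix.linftyOpNormedRing Matrix.linftyOpNormedAlgebra

open MeasureTheory NormedSpace

section BanachAlgebra

variable {𝔸 : Type*} [NormedRing 𝔸] [NormedAlgebra ℝ 𝔸] [CompleteSpace 𝔸]

theorem Commute.intervalIntegral_left {f : ℝ → 𝔸} {b : 𝔸} {a₁ a₂ : ℝ}
    (hf : IntervalIntegrable f volume a₁ a₂) (h : ∀ s ∈ Set.uIcc a₁ a₂, Commute (f s) b) :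
    Commute (∫ s in a₁..a₂, f s) b :=
  calc (∫ s in a₁..a₂, f s) * b
      = (ContinuousLinearMap.mul ℝ 𝔸).flip b (∫ s in a₁..a₂, f s) := rfl
    _ = ∫ s in a₁..a₂, (ContinuousLinearMap.mul ℝ 𝔸).flip b (f s) :=
        (ContinuousLinearMap.intervalIntegral_comp_comm _ hf).symm
    _ = ∫ s in a₁..a₂, ContinuousLinearMap.mul ℝ 𝔸 b (f s) :=
        integral_congr fun s hs => (h s hs).eq
    _ = ContinuousLinearMap.mul ℝ 𝔸 b (∫ s in a₁..a₂, f s) :=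
        ContinuousLinearMap.intervalIntegral_comp_comm _ hf
    _ = b * ∫ s in a₁..a₂, f s := rfl

theorem Commute.intervalIntegral_intervalIntegral {A : ℝ → 𝔸} (hA : Continuous A)
    (hcomm : ∀ s t, Commute (A s) (A t)) (a b c d : ℝ) :
    Commute (∫ s in a..b, A s) (∫ s in c..d, A s) :=
  .intervalIntegral_left (hA.intervalIntegrable a b) fun s _ =>
    (Commute.intervalIntegral_left (hA.intervalIntegrable c d) fun t _ => hcomm t s).symm

theorem exp_intervalIntegral_eq_mul {A : ℝ → 𝔸} (hA : Continuous A)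
    (hcomm : ∀ s t, Commute (A s) (A t)) (a b c : ℝ) :
    exp (∫ s in a..c, A s) = exp (∫ s in a..b, A s) * exp (∫ s in b..c, A s) := by
  let _ : NormedAlgebra ℚ 𝔸 := .restrictScalars ℚ ℝ 𝔸
  rw [← NormedSpace.exp_add_of_commute (.intervalIntegral_intervalIntegral hA hcomm a b b c),
    integral_add_adjacent_intervals (hA.intervalIntegrable a b) (hA.intervalIntegrable b c)]

theorem hasDerivAt_exp_intervalIntegral {A : ℝ → 𝔸} (hA : Continuous A)
    (hcomm : ∀ s t, Commute (A s) (A t)) (a t : ℝ) :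
    HasDerivAt (fun u => exp (∫ s in a..u, A s)) (exp (∫ s in a..t, A s) * A t) t := by
  have hexp : HasFDerivAt exp (1 : 𝔸 →L[ℝ] 𝔸) (∫ s in t..t, A s) := by
    rw [integral_same]
    exact hasFDerivAt_exp_zero
  have hlocal : HasDerivAt (fun u => exp (∫ s in t..u, A s)) (A t) t :=
    hexp.comp_hasDerivAt (f := fun u => ∫ s in t..u, A s) t
      (hA.integral_hasStrictDerivAt t t).hasDerivAt
  exact (hlocal.const_mul _).congr_of_eventuallyEq
    (.of_forall fun u => exp_intervalIntegral_eq_mul hA hcomm a t u)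

end BanachAlgebra

theorem magnus_first_term_abelian
    (n : ℕ) (A : ℝ → Matrix (Fin n) (Fin n) ℝ) (hA : Continuous A)
    (hcomm : ∀ s t : ℝ, A s * A t = A t * A s)
    (g₀ : Matrix (Fin n) (Fin n) ℝ)
    (g : ℝ → Matrix (Fin n) (Fin n) ℝ)
    (hg : ∀ t : ℝ, g t = g₀ * NormedSpace.exp (∫ s in (0:ℝ)..t, A s)) :
    g 0 = g₀ ∧ ∀ t : ℝ, HasDerivAt g (g t * A t) t := by
  obtain rfl : g = fun t => g₀ * exp (∫ s in (0:ℝ)..t, A s) := funext hg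
  refine ⟨by simp, fun t => ?_⟩
  have h := (hasDerivAt_exp_intervalIntegral hA hcomm 0 t).const_mul g₀
  rw [← mul_assoc] at h
  exact h
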